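/- With the same notation, for every initial g ∈ t·B_{ℓ∞(S_E)}, div(Tⁿ g) converges to ψ̃ = u₀ − u_opt as n → ∞, where u_opt is the exact minimizer of the graph ROF functional (1/2)‖u₀ − u‖²_{ℓ²(S_V)} + t‖grad u‖_{ℓ¹(S_E)}. -/

import Mathlib

/-- Gradient operator on a directed graph with edge source/target maps. -/
def grad {V E : Type*} (src tgt : E → V) (f : V → ℝ) : E → ℝ :=
  fun e => f (tgt e) - f (src e)

/-- Divergence operator on a directed graph: incoming minus outgoing flow. -/
def gdiv {V E : Type*} [Fintype E] [DecidableEq V] (src tgt : E → V) (g : E → ℝ) : V → ℝ :=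
  fun v => (∑ e : E, if tgt e = v then g e else 0) - (∑ e : E, if src e = v then g e else 0)

/-- Connectedness of the underlying undirected graph. -/
def GConnected {V E : Type*} (src tgt : E → V) : Prop :=
  ∀ v w : V, Relation.ReflTransGen
    (fun a b => ∃ e : E, (src e = a ∧ tgt e = b) ∨ (src e = b ∧ tgt e = a)) v w

/-- Projection (clamp) of `x` onto the interval `[-t, t]`. -/
noncomputable def clamp (t x : ℝ) : ℝ := max (-t) (min t x)

/-- Divergence ignoring the flow on the edge `k`. -/
def divWo {V E : Type*} [Fintype E] [DecidableEq V] (src tgt : E → V) (k : E)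
    (g : E → ℝ) : V → ℝ :=
  fun v => gdiv src tgt g v + (if src k = v then g k else 0) - (if tgt k = v then g k else 0)

/-- The optimal new value for the flow on the edge `k` before clamping. -/
noncomputable def Kg {V E : Type*} [Fintype E] [DecidableEq V] (src tgt : E → V) (u₀ : V → ℝ)
    (g : E → ℝ) (k : E) : ℝ :=
  ((u₀ (tgt k) - divWo src tgt k g (tgt k)) - (u₀ (src k) - divWo src tgt k g (src k))) / 2

/-- The single-edge coordinate-descent update operator `T_k`. -/
noncomputable def Tk {V E : Type*} [Fintype E] [DecidableEq V] [DecidableEq E]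
    (src tgt : E → V) (u₀ : V → ℝ) (t : ℝ) (k : E) (g : E → ℝ) : E → ℝ :=
  Function.update g k (clamp t (Kg src tgt u₀ g k))

/-! Each single-edge update minimizes the dual energy `‖u₀ - div g‖²` exactly in one coordinate
and then projects onto `[-t, t]`, so a sweep maps the compact box `t · B_∞` into itself,
continuously, without raising that energy. Along an orbit the energy therefore converges, and
every cluster point `y` satisfies `energy (sweep y) = energy y`. This equality forces each
non-loop edge of `y` to sit at its clamped optimum, which is the optimality condition
`y e * grad u e = t * |grad u e|` for `u = u₀ - div y`; by weak duality `u` minimizes the ROF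
energy, and strict convexity of the latter gives `u = u_opt`. -/

open Finset Filter Topology Set

theorem abs_clamp_le {t : ℝ} (ht : 0 ≤ t) (x : ℝ) : |clamp t x| ≤ t :=
  abs_le.2 ⟨le_max_left _ _, max_le (by linarith) (min_le_left _ _)⟩

theorem sq_sub_clamp_add_sq_clamp_sub_le {t y : ℝ} (hy : |y| ≤ t) (x : ℝ) :
    (y - clamp t x) ^ 2 + (clamp t x - x) ^ 2 ≤ (y - x) ^ 2 := by
  obtain ⟨hy₁, hy₂⟩ := abs_le.1 hy
  rcases le_total x (-t) with hx | hx
  · rw [clamp, min_eq_right (by linarith), max_eq_left hx]; nlinarith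
  rcases le_total t x with hx' | hx'
  · rw [clamp, min_eq_left hx', max_eq_right (by linarith)]; nlinarith
  · rw [clamp, min_eq_right hx', max_eq_right hx]; nlinarith

theorem mul_eq_mul_abs_of_eq_clamp {t g γ : ℝ} (hg : |g| ≤ t) (hfix : g = clamp t (γ / 2 + g)) :
    g * γ = t * |γ| := by
  obtain ⟨hg₁, hg₂⟩ := abs_le.1 hg
  rcases le_total (γ / 2 + g) (-t) with hx | hx
  · rw [clamp, min_eq_right (by linarith), max_eq_left hx] at hfix
    rw [abs_of_nonpos (by linarith), hfix]; ring
  rcases le_total t (γ / 2 + g) with hx' | hx'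
  · rw [clamp, min_eq_left hx', max_eq_right (by linarith)] at hfix
    rw [abs_of_nonneg (by linarith), hfix]
  · rw [clamp, min_eq_right hx', max_eq_right hx] at hfix
    obtain rfl : γ = 0 := by linarith
    simp

theorem continuous_clamp (t : ℝ) : Continuous (clamp t) :=
  continuous_const.max (continuous_const.min continuous_id)

theorem tendsto_iterate_of_lyapunov {X Y : Type*} [TopologicalSpace X] [FirstCountableTopology X]
    [TopologicalSpace Y] {K : Set X} (hK : IsCompact K) {S : X → X} (hS : Continuous S)
    (hSK : MapsTo S K K) {F : X → ℝ} (hF : Continuous F) (hdec : ∀ x ∈ K, F (S x) ≤ F x)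
    {φ : X → Y} (hφ : Continuous φ) {c : Y} (hfix : ∀ y ∈ K, F (S y) = F y → φ y = c)
    {x : X} (hx : x ∈ K) : Tendsto (fun n => φ (S^[n] x)) atTop (𝓝 c) := by
  have horbit (n : ℕ) : S^[n] x ∈ K := hSK.iterate n hx
  have hanti : Antitone fun n => F (S^[n] x) := antitone_nat_of_succ_le fun n => by
    rw [Function.iterate_succ_apply']
    exact hdec _ (horbit n)
  have hbdd : BddBelow (range fun n => F (S^[n] x)) :=
    (hK.bddBelow_image hF.continuousOn).mono
      (range_subset_iff.2 fun n => mem_image_of_mem F (horbit n))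
  have hlim := tendsto_atTop_ciInf hanti hbdd
  refine tendsto_of_subseq_tendsto fun ns hns => ?_
  obtain ⟨y, hyK, ms, hms, hy⟩ := hK.tendsto_subseq fun n => horbit (ns n)
  have hidx : Tendsto (fun i => ns (ms i)) atTop atTop := hns.comp hms.tendsto_atTop
  have hFy : F y = ⨅ n, F (S^[n] x) :=
    tendsto_nhds_unique ((hF.tendsto y).comp hy) (hlim.comp hidx)
  have hFSy : F (S y) = ⨅ n, F (S^[n] x) := by
    refine tendsto_nhds_unique (((hF.comp hS).tendsto y).comp hy) ?_
    convert hlim.comp ((tendsto_add_atTop_nat 1).comp hidx) using 1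
    ext i
    simp [Function.iterate_succ_apply']
  exact ⟨ms, hfix y hyK (hFSy.trans hFy.symm) ▸ (hφ.tendsto y).comp hy⟩

theorem mem_closedBall_zero_iff_forall_abs_le {E : Type*} [Fintype E] {t : ℝ} (ht : 0 ≤ t)
    {h : E → ℝ} : h ∈ Metric.closedBall 0 t ↔ ∀ e, |h e| ≤ t := by
  simp only [mem_closedBall_zero_iff, pi_norm_le_iff_of_nonneg ht, Real.norm_eq_abs]

section ROF

variable {V E : Type*} [Fintype V] [Fintype E] (src tgt : E → V) (u₀ : V → ℝ)

noncomputable def rof (t : ℝ) (u : V → ℝ) : ℝ :=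
  (1 / 2) * ∑ v, (u₀ v - u v) ^ 2 + t * ∑ e, |grad src tgt u e|

theorem rof_midpoint_add_le {t : ℝ} (ht : 0 ≤ t) (u w : V → ℝ) :
    rof src tgt u₀ t (fun v => (u v + w v) / 2) + (1 / 8) * ∑ v, (u v - w v) ^ 2 ≤
      (rof src tgt u₀ t u + rof src tgt u₀ t w) / 2 := by
  have hquad : (1 / 2) * ∑ v, (u₀ v - (u v + w v) / 2) ^ 2 + (1 / 8) * ∑ v, (u v - w v) ^ 2 =
      ((1 / 2) * ∑ v, (u₀ v - u v) ^ 2 + (1 / 2) * ∑ v, (u₀ v - w v) ^ 2) / 2 := by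
    simp only [mul_sum, ← sum_add_distrib, sum_div]
    exact sum_congr rfl fun v _ => by ring
  have htv : ∑ e, |grad src tgt (fun v => (u v + w v) / 2) e| ≤
      (∑ e, |grad src tgt u e| + ∑ e, |grad src tgt w e|) / 2 := by
    rw [← sum_add_distrib, sum_div]
    refine sum_le_sum fun e _ => ?_
    have hgrad : grad src tgt (fun v => (u v + w v) / 2) e =
        (grad src tgt u e + grad src tgt w e) / 2 := by
      simp only [grad]; ring
    rw [hgrad, abs_div, abs_two]
    linarith [abs_add_le (grad src tgt u e) (grad src tgt w e)]
  simp only [rof]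
  linarith [mul_le_mul_of_nonneg_left htv ht]

theorem eq_of_forall_rof_le {t : ℝ} (ht : 0 ≤ t) {u u' : V → ℝ}
    (hu : ∀ w, rof src tgt u₀ t u ≤ rof src tgt u₀ t w)
    (hu' : rof src tgt u₀ t u' ≤ rof src tgt u₀ t u) : u = u' := by
  have hmid := rof_midpoint_add_le src tgt u₀ ht u u'
  have hmin := hu fun v => (u v + u' v) / 2
  have hnonneg : 0 ≤ fun v => (u v - u' v) ^ 2 := fun v => sq_nonneg _
  have hsum : ∑ v, (u v - u' v) ^ 2 = 0 :=
    le_antisymm (by linarith) (Fintype.sum_nonneg hnonneg)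
  funext v
  have hv := congrFun ((Fintype.sum_eq_zero_iff_of_nonneg hnonneg).1 hsum) v
  exact sub_eq_zero.1 (pow_eq_zero_iff two_ne_zero |>.1 hv)

end ROF

section Graph

variable {V E : Type*} [Fintype E] [DecidableEq V] (src tgt : E → V) (u₀ : V → ℝ)

theorem continuous_gdiv : Continuous (gdiv (E := E) src tgt) := by
  refine continuous_pi fun v => .sub ?_ ?_ <;>
  exact continuous_finsetSum _ fun e _ => by split_ifs <;> fun_prop

theorem Kg_congr {h₁ h₂ : E → ℝ} {k : E} (hdiv : gdiv src tgt h₁ = gdiv src tgt h₂)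
    (hk : h₁ k = h₂ k) : Kg src tgt u₀ h₁ k = Kg src tgt u₀ h₂ k := by
  simp only [Kg, divWo, hdiv, hk]

theorem Kg_of_ne (h : E → ℝ) {k : E} (hk : src k ≠ tgt k) :
    Kg src tgt u₀ h k = grad src tgt (u₀ - gdiv src tgt h) k / 2 + h k := by
  simp only [Kg, divWo, grad, Pi.sub_apply, if_pos, hk, hk.symm, if_false]
  ring

theorem continuous_Kg (k : E) : Continuous fun h => Kg src tgt u₀ h k := by
  have hdiv (v : V) : Continuous fun h => gdiv src tgt h v :=
    (continuous_apply v).comp (continuous_gdiv src tgt)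
  unfold Kg divWo
  split_ifs <;> fun_prop

section Duality

variable [Fintype V]

theorem sum_mul_gdiv (f : V → ℝ) (g : E → ℝ) :
    ∑ v, f v * gdiv src tgt g v = ∑ e, g e * grad src tgt f e := by
  simp only [gdiv, grad, mul_sub, mul_sum, mul_ite, mul_zero, sum_sub_distrib]
  rw [sum_comm (γ := V), sum_comm (γ := V)]
  simp [mul_comm]

noncomputable def dualEnergy (h : E → ℝ) : ℝ := ∑ v, (u₀ v - gdiv src tgt h v) ^ 2

theorem continuous_dualEnergy : Continuous (dualEnergy src tgt u₀) := by
  have hdiv (v : V) : Continuous fun h => gdiv src tgt h v :=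
    (continuous_apply v).comp (continuous_gdiv src tgt)
  unfold dualEnergy
  fun_prop

variable {t : ℝ}

theorem rof_le_of_dual_certificate {g : E → ℝ} (hg : ∀ e, |g e| ≤ t)
    (hcert : ∀ e, g e * grad src tgt (u₀ - gdiv src tgt g) e =
      t * |grad src tgt (u₀ - gdiv src tgt g) e|) (w : V → ℝ) :
    rof src tgt u₀ t (u₀ - gdiv src tgt g) ≤ rof src tgt u₀ t w := by
  set u := u₀ - gdiv src tgt g with hu
  have hpair : ∑ v, (u₀ v - u v) * (u v - w v) =
      t * ∑ e, |grad src tgt u e| - ∑ e, g e * grad src tgt w e := by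
    calc ∑ v, (u₀ v - u v) * (u v - w v) = ∑ v, (u - w) v * gdiv src tgt g v :=
          sum_congr rfl fun v _ => by simp only [hu, Pi.sub_apply]; ring
      _ = ∑ e, (g e * grad src tgt u e - g e * grad src tgt w e) := by
          rw [sum_mul_gdiv]
          exact sum_congr rfl fun e _ => by simp only [grad, Pi.sub_apply]; ring
      _ = _ := by rw [sum_sub_distrib, mul_sum]; simp only [hcert]
  have hdual : ∑ e, g e * grad src tgt w e ≤ t * ∑ e, |grad src tgt w e| := by
    rw [mul_sum]
    refine sum_le_sum fun e _ => (le_abs_self _).trans ?_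
    rw [abs_mul]
    exact mul_le_mul_of_nonneg_right (hg e) (abs_nonneg _)
  have hquad : (1 / 2) * ∑ v, (u₀ v - u v) ^ 2 + ∑ v, (u₀ v - u v) * (u v - w v) ≤
      (1 / 2) * ∑ v, (u₀ v - w v) ^ 2 := by
    rw [mul_sum, mul_sum, ← sum_add_distrib]
    exact sum_le_sum fun v _ => by nlinarith [sq_nonneg (u v - w v)]
  simp only [rof]
  linarith

theorem gdiv_eq_of_forall_eq_clamp (ht : 0 ≤ t) {uopt : V → ℝ}
    (hopt : ∀ u, rof src tgt u₀ t uopt ≤ rof src tgt u₀ t u) {g : E → ℝ} (hg : ∀ e, |g e| ≤ t)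
    (hfix : ∀ k, src k ≠ tgt k → g k = clamp t (Kg src tgt u₀ g k)) :
    gdiv src tgt g = u₀ - uopt := by
  have hcert (e : E) : g e * grad src tgt (u₀ - gdiv src tgt g) e =
      t * |grad src tgt (u₀ - gdiv src tgt g) e| := by
    rcases eq_or_ne (src e) (tgt e) with he | he
    · simp [grad, he]
    · have hfix_e := hfix e he
      rw [Kg_of_ne src tgt u₀ g he] at hfix_e
      exact mul_eq_mul_abs_of_eq_clamp (hg e) hfix_e
  rw [← eq_of_forall_rof_le src tgt u₀ ht (rof_le_of_dual_certificate src tgt u₀ hg hcert)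
    (hopt _), sub_sub_cancel]

end Duality

section Updates

variable [DecidableEq E]

theorem gdiv_update (h : E → ℝ) (k : E) (x : ℝ) (v : V) :
    gdiv src tgt (Function.update h k x) v =
      gdiv src tgt h v + (if tgt k = v then x - h k else 0) - (if src k = v then x - h k else 0) := by
  have hupd : Function.update h k x = h + Pi.single k (x - h k) := by
    ext e; rcases eq_or_ne e k with rfl | hek <;> simp [*]
  have hsum (st : E → V) : (∑ e, if st e = v then Function.update h k x e else 0) =
      (∑ e, if st e = v then h e else 0) + if st k = v then x - h k else 0 := by
    simp only [hupd, Pi.add_apply, ite_add_zero, sum_add_distrib, add_right_inj]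
    rw [Fintype.sum_eq_single k fun e he => by simp [he]]
    simp
  simp only [gdiv, hsum]
  ring

theorem gdiv_update_of_eq (h : E → ℝ) {k : E} (hk : src k = tgt k) (x : ℝ) :
    gdiv src tgt (Function.update h k x) = gdiv src tgt h := by
  ext v
  rw [gdiv_update, hk]
  ring

theorem continuous_Tk (t : ℝ) (k : E) : Continuous (Tk src tgt u₀ t k) :=
  continuous_id.update k ((continuous_clamp t).comp (continuous_Kg src tgt u₀ k))

variable {t : ℝ}

theorem abs_Tk_le (ht : 0 ≤ t) (k : E) {h : E → ℝ} (hh : ∀ e, |h e| ≤ t) (e : E) :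
    |Tk src tgt u₀ t k h e| ≤ t := by
  rcases eq_or_ne e k with rfl | hek
  · simpa [Tk] using abs_clamp_le ht _
  · simpa [Tk, hek] using hh e

noncomputable def sweep (t : ℝ) (ℓ : List E) (h : E → ℝ) : E → ℝ :=
  ℓ.foldl (fun h' k => Tk src tgt u₀ t k h') h

theorem sweep_cons (k : E) (ℓ : List E) (h : E → ℝ) :
    sweep src tgt u₀ t (k :: ℓ) h = sweep src tgt u₀ t ℓ (Tk src tgt u₀ t k h) := rfl

theorem continuous_sweep (t : ℝ) (ℓ : List E) : Continuous (sweep src tgt u₀ t ℓ) := by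
  induction ℓ with
  | nil => exact continuous_id
  | cons k ℓ ih => exact ih.comp (continuous_Tk src tgt u₀ t k)

theorem abs_sweep_le (ht : 0 ≤ t) (ℓ : List E) {h : E → ℝ} (hh : ∀ e, |h e| ≤ t) (e : E) :
    |sweep src tgt u₀ t ℓ h e| ≤ t := by
  induction ℓ generalizing h with
  | nil => exact hh e
  | cons k ℓ ih => exact ih (abs_Tk_le src tgt u₀ ht k hh)

section Energy

variable [Fintype V]

theorem dualEnergy_update_of_ne (h : E → ℝ) {k : E} (hk : src k ≠ tgt k) (x : ℝ) :
    dualEnergy src tgt u₀ (Function.update h k x) = dualEnergy src tgt u₀ h +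
      2 * ((x - Kg src tgt u₀ h k) ^ 2 - (h k - Kg src tgt u₀ h k) ^ 2) := by
  rw [← sub_eq_iff_eq_add', dualEnergy, dualEnergy, ← sum_sub_distrib,
    Fintype.sum_eq_add (tgt k) (src k) hk.symm fun v hv => by
      simp [gdiv_update, Ne.symm hv.1, Ne.symm hv.2]]
  simp only [gdiv_update, Kg_of_ne src tgt u₀ h hk, grad, Pi.sub_apply, if_pos, hk, hk.symm,
    if_false]
  ring

theorem dualEnergy_Tk_add_sq_le {k : E} (hk : src k ≠ tgt k) {h : E → ℝ} (hh : ∀ e, |h e| ≤ t) :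
    dualEnergy src tgt u₀ (Tk src tgt u₀ t k h) + 2 * (h k - clamp t (Kg src tgt u₀ h k)) ^ 2 ≤
      dualEnergy src tgt u₀ h := by
  rw [Tk, dualEnergy_update_of_ne src tgt u₀ h hk]
  linarith [sq_sub_clamp_add_sq_clamp_sub_le (hh k) (Kg src tgt u₀ h k)]

theorem dualEnergy_Tk_le (k : E) {h : E → ℝ} (hh : ∀ e, |h e| ≤ t) :
    dualEnergy src tgt u₀ (Tk src tgt u₀ t k h) ≤ dualEnergy src tgt u₀ h := by
  rcases eq_or_ne (src k) (tgt k) with hk | hk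
  · rw [Tk, dualEnergy, dualEnergy, gdiv_update_of_eq src tgt h hk]
  · linarith [dualEnergy_Tk_add_sq_le src tgt u₀ hk hh,
      sq_nonneg (h k - clamp t (Kg src tgt u₀ h k))]

theorem eq_clamp_of_dualEnergy_Tk_eq {k : E} (hk : src k ≠ tgt k) {h : E → ℝ}
    (hh : ∀ e, |h e| ≤ t)
    (heq : dualEnergy src tgt u₀ (Tk src tgt u₀ t k h) = dualEnergy src tgt u₀ h) :
    h k = clamp t (Kg src tgt u₀ h k) := by
  have := dualEnergy_Tk_add_sq_le src tgt u₀ hk hh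
  nlinarith [sq_nonneg (h k - clamp t (Kg src tgt u₀ h k))]

theorem gdiv_Tk_of_dualEnergy_Tk_eq (k : E) {h : E → ℝ} (hh : ∀ e, |h e| ≤ t)
    (heq : dualEnergy src tgt u₀ (Tk src tgt u₀ t k h) = dualEnergy src tgt u₀ h) :
    gdiv src tgt (Tk src tgt u₀ t k h) = gdiv src tgt h := by
  rcases eq_or_ne (src k) (tgt k) with hk | hk
  · exact gdiv_update_of_eq src tgt h hk _
  · rw [Tk, ← eq_clamp_of_dualEnergy_Tk_eq src tgt u₀ hk hh heq, Function.update_eq_self]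

theorem dualEnergy_sweep_le (ht : 0 ≤ t) (ℓ : List E) {h : E → ℝ} (hh : ∀ e, |h e| ≤ t) :
    dualEnergy src tgt u₀ (sweep src tgt u₀ t ℓ h) ≤ dualEnergy src tgt u₀ h := by
  induction ℓ generalizing h with
  | nil => exact le_rfl
  | cons k ℓ ih =>
    exact (ih (abs_Tk_le src tgt u₀ ht k hh)).trans (dualEnergy_Tk_le src tgt u₀ k hh)

/-- No update raises the energy, so along an energy-preserving sweep none lowers it; an update
on a self-loop changes neither `div` nor any other coordinate. -/
theorem eq_clamp_of_dualEnergy_sweep_eq (ht : 0 ≤ t) {ℓ : List E} {h : E → ℝ}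
    (hh : ∀ e, |h e| ≤ t)
    (heq : dualEnergy src tgt u₀ (sweep src tgt u₀ t ℓ h) = dualEnergy src tgt u₀ h)
    {j : E} (hj : j ∈ ℓ) (hjl : src j ≠ tgt j) : h j = clamp t (Kg src tgt u₀ h j) := by
  induction ℓ generalizing h with
  | nil => cases hj
  | cons k ℓ ih =>
    have hh' := abs_Tk_le src tgt u₀ ht k hh
    have hsweep := dualEnergy_sweep_le src tgt u₀ ht ℓ hh'
    have hTk_le := dualEnergy_Tk_le src tgt u₀ k hh
    rw [sweep_cons] at heq
    have hTk : dualEnergy src tgt u₀ (Tk src tgt u₀ t k h) = dualEnergy src tgt u₀ h := by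
      linarith
    rcases eq_or_ne j k with rfl | hjk
    · exact eq_clamp_of_dualEnergy_Tk_eq src tgt u₀ hjl hh hTk
    have hval : Tk src tgt u₀ t k h j = h j := Function.update_of_ne hjk _ _
    have hdiv := gdiv_Tk_of_dualEnergy_Tk_eq src tgt u₀ k hh hTk
    rw [← hval, ← Kg_congr src tgt u₀ hdiv hval]
    exact ih hh' (by linarith) ((List.mem_cons.1 hj).resolve_left hjk)

end Energy

end Updates

end Graph

theorem stmt15_general {V E : Type*} [Fintype V] [Fintype E] [DecidableEq V] [DecidableEq E]
    (src tgt : E → V) (u₀ uopt : V → ℝ) (t : ℝ) (ht : 0 < t)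
    (L : List E) (hcov : ∀ e : E, e ∈ L)
    (hopt : ∀ u : V → ℝ,
      (1 / 2) * ∑ v : V, (u₀ v - uopt v) ^ 2 + t * ∑ e : E, |grad src tgt uopt e| ≤
        (1 / 2) * ∑ v : V, (u₀ v - u v) ^ 2 + t * ∑ e : E, |grad src tgt u e|) :
    ∀ g : E → ℝ, (∀ e : E, |g e| ≤ t) →
      Filter.Tendsto
        (fun n : ℕ =>
          gdiv src tgt ((fun h : E → ℝ => L.foldl (fun h' k => Tk src tgt u₀ t k h') h)^[n] g))
        Filter.atTop (nhds (fun v => u₀ v - uopt v)) := by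
  intro g hg
  have hbox (h : E → ℝ) := mem_closedBall_zero_iff_forall_abs_le (h := h) ht.le
  refine tendsto_iterate_of_lyapunov (isCompact_closedBall 0 t) (continuous_sweep src tgt u₀ t L)
    (fun h hh => (hbox _).2 (abs_sweep_le src tgt u₀ ht.le L ((hbox h).1 hh)))
    (continuous_dualEnergy src tgt u₀)
    (fun h hh => dualEnergy_sweep_le src tgt u₀ ht.le L ((hbox h).1 hh))
    (continuous_gdiv src tgt) (fun h hh heq => ?_) ((hbox g).2 hg)
  exact gdiv_eq_of_forall_eq_clamp src tgt u₀ ht.le hopt ((hbox h).1 hh) fun k hk =>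
    eq_clamp_of_dualEnergy_sweep_eq src tgt u₀ ht.le ((hbox h).1 hh) heq (hcov k) hk

theorem stmt15 {V E : Type*} [Fintype V] [Fintype E] [DecidableEq V] [DecidableEq E]
    (src tgt : E → V) (hconn : GConnected src tgt) (u₀ uopt : V → ℝ) (t : ℝ) (ht : 0 < t)
    (L : List E) (hnd : L.Nodup) (hcov : ∀ e : E, e ∈ L)
    (hopt : ∀ u : V → ℝ,
      (1 / 2) * ∑ v : V, (u₀ v - uopt v) ^ 2 + t * ∑ e : E, |grad src tgt uopt e| ≤
        (1 / 2) * ∑ v : V, (u₀ v - u v) ^ 2 + t * ∑ e : E, |grad src tgt u e|) :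
    ∀ g : E → ℝ, (∀ e : E, |g e| ≤ t) →
      Filter.Tendsto
        (fun n : ℕ =>
          gdiv src tgt ((fun h : E → ℝ => L.foldl (fun h' k => Tk src tgt u₀ t k h') h)^[n] g))
        Filter.atTop (nhds (fun v => u₀ v - uopt v)) :=
  stmt15_general src tgt u₀ uopt t ht L hcov hopt
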